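/- Let $(X,\mu)$ be a finite measure space, $s : X \to \mathbb{R}$ bounded measurable with average $S = \frac{1}{\mu(X)}\int_X s\, d\mu$, and for each $k$ let $s_0^{(k)}, \dots, s_{N_k}^{(k)}$ be unit vectors in $L^2(\mu)$ with $B_k := \sum_i |s_i^{(k)}|^2$ satisfying $B_k = 1 + \frac{s}{4\pi} k^{-1} + O(k^{-2})$ uniformly. Define $m_i^{(k)} = -\frac{k^{-1}}{4\pi}\int_X |s_i^{(k)}|^2 (s - S)\, d\mu$. Then $\left(\sum_{i=0}^{N_k} (m_i^{(k)})^2\right)^{1/2} \le \frac{k^{-1}}{4\pi}\, \|s - S\|_{L^2(\mu)} + O(k^{-2} \mu(X)^{1/2})$. -/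

import Mathlib

/-!
Write `g = s - S` and `f_i = |s_i|²`, so that `m_i = -(k⁻¹/4π) ∫ f_i g`. Each `f_i` is a probability
density, so Cauchy–Schwarz for it gives `(∫ f_i g)² ≤ ∫ f_i g²`. Summing over `i` yields
`∑ (∫ f_i g)² ≤ ∫ B_k g² ≤ (1 + O(k⁻¹)) ∫ g²`, because the expansion of `B_k` forces
`B_k ≤ 1 + O(k⁻¹)` uniformly. Taking square roots, the error term is `O(k⁻²) ‖g‖_{L²}`, and
`‖g‖_{L²} ≤ sup |g| · μ(X)^{1/2}`.
-/

open MeasureTheory Filter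

theorem norm_sq_le_sq_of_abs_le {y M : ℝ} (h : |y| ≤ M) : ‖y ^ 2‖ ≤ M ^ 2 := by
  rw [norm_pow, Real.norm_eq_abs]
  exact pow_le_pow_left₀ (abs_nonneg y) h 2

section WeightedIntegrals

variable {X : Type*} [MeasurableSpace X] {μ : Measure X}

theorem sq_integral_mul_le_integral_mul_sq {f g : X → ℝ} (hf0 : 0 ≤ᵐ[μ] f)
    (hf1 : ∫ x, f x ∂μ = 1) (hfg : Integrable (fun x => f x * g x) μ)
    (hfg2 : Integrable (fun x => f x * g x ^ 2) μ) :
    (∫ x, f x * g x ∂μ) ^ 2 ≤ ∫ x, f x * g x ^ 2 ∂μ := by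
  set a := ∫ x, f x * g x ∂μ
  have hf : Integrable f μ := .of_integral_ne_zero (by simp [hf1])
  have hvar : 0 ≤ ∫ x, f x * (g x - a) ^ 2 ∂μ :=
    integral_nonneg_of_ae (hf0.mono fun x hx => mul_nonneg hx (sq_nonneg _))
  have hvar_eq : ∫ x, f x * (g x - a) ^ 2 ∂μ = ∫ x, f x * g x ^ 2 ∂μ - a ^ 2 :=
    calc ∫ x, f x * (g x - a) ^ 2 ∂μ
        = ∫ x, f x * g x ^ 2 - 2 * a * (f x * g x) + a ^ 2 * f x ∂μ := by
          congr 1; funext x; ring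
      _ = ∫ x, f x * g x ^ 2 ∂μ - a ^ 2 := by
          have hsub : Integrable (fun x => f x * g x ^ 2 - 2 * a * (f x * g x)) μ :=
            hfg2.sub (hfg.const_mul _)
          rw [integral_add hsub (hf.const_mul _),
            integral_sub hfg2 (hfg.const_mul _), integral_const_mul, integral_const_mul, hf1]
          ring
  linarith

theorem sqrt_integral_sq_le [IsFiniteMeasure μ] {g : X → ℝ} {M : ℝ} (hM : 0 ≤ M)
    (hgM : ∀ x, |g x| ≤ M) :
    Real.sqrt (∫ x, g x ^ 2 ∂μ) ≤ M * Real.sqrt (μ Set.univ).toReal := by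
  have hint : ∫ x, g x ^ 2 ∂μ ≤ M ^ 2 * (μ Set.univ).toReal := by
    simpa [Real.norm_eq_abs, measureReal_def] using (le_abs_self _).trans
      (norm_integral_le_of_norm_le_const (μ := μ) (ae_of_all _ fun x => norm_sq_le_sq_of_abs_le (hgM x)))
  calc Real.sqrt (∫ x, g x ^ 2 ∂μ) ≤ Real.sqrt (M ^ 2 * (μ Set.univ).toReal) :=
        Real.sqrt_le_sqrt hint
    _ = M * Real.sqrt (μ Set.univ).toReal := by
        rw [Real.sqrt_mul (sq_nonneg M), Real.sqrt_sq hM]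

theorem sum_sq_integral_mul_le [IsFiniteMeasure μ] {ι : Type*} [Fintype ι] {f : ι → X → ℝ}
    {g : X → ℝ} {b M : ℝ} (hf0 : ∀ i x, 0 ≤ f i x) (hf1 : ∀ i, ∫ x, f i x ∂μ = 1)
    (hfb : ∀ x, ∑ i, f i x ≤ b) (hg : AEStronglyMeasurable g μ) (hgM : ∀ x, |g x| ≤ M) :
    ∑ i, (∫ x, f i x * g x ∂μ) ^ 2 ≤ b * ∫ x, g x ^ 2 ∂μ := by
  have hg2M : ∀ x, ‖g x ^ 2‖ ≤ M ^ 2 := fun x => norm_sq_le_sq_of_abs_le (hgM x)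
  have hg2 : Integrable (fun x => g x ^ 2) μ :=
    .of_bound (hg.pow 2) (M ^ 2) (ae_of_all _ hg2M)
  have hf : ∀ i, Integrable (f i) μ := fun i => .of_integral_ne_zero (by simp [hf1 i])
  have hfg : ∀ i, Integrable (fun x => f i x * g x) μ := fun i =>
    (hf i).mul_bdd hg (ae_of_all _ hgM)
  have hfg2 : ∀ i, Integrable (fun x => f i x * g x ^ 2) μ := fun i =>
    (hf i).mul_bdd (hg.pow 2) (ae_of_all _ hg2M)
  calc ∑ i, (∫ x, f i x * g x ∂μ) ^ 2 ≤ ∑ i, ∫ x, f i x * g x ^ 2 ∂μ :=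
        Finset.sum_le_sum fun i _ => sq_integral_mul_le_integral_mul_sq
          (ae_of_all _ (hf0 i)) (hf1 i) (hfg i) (hfg2 i)
    _ = ∫ x, (∑ i, f i x) * g x ^ 2 ∂μ := by
        simp_rw [Finset.sum_mul]
        exact (integral_finsetSum _ fun i _ => hfg2 i).symm
    _ ≤ ∫ x, b * g x ^ 2 ∂μ := by
        refine integral_mono ?_ (hg2.const_mul b)
          fun x => mul_le_mul_of_nonneg_right (hfb x) (sq_nonneg _)
        simp_rw [Finset.sum_mul]
        exact integrable_finsetSum _ fun i _ => hfg2 i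
    _ = b * ∫ x, g x ^ 2 ∂μ := integral_const_mul _ _

theorem sqrt_sum_sq_integral_mul_le [IsFiniteMeasure μ] {ι : Type*} [Fintype ι]
    {f : ι → X → ℝ} {g : X → ℝ} {t M : ℝ} (ht : 0 ≤ t) (hM : 0 ≤ M) (hf0 : ∀ i x, 0 ≤ f i x)
    (hf1 : ∀ i, ∫ x, f i x ∂μ = 1) (hfb : ∀ x, ∑ i, f i x ≤ 1 + t)
    (hg : AEStronglyMeasurable g μ) (hgM : ∀ x, |g x| ≤ M) :
    Real.sqrt (∑ i, (∫ x, f i x * g x ∂μ) ^ 2) ≤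
      Real.sqrt (∫ x, g x ^ 2 ∂μ) + t * (M * Real.sqrt (μ Set.univ).toReal) := by
  have hI : 0 ≤ ∫ x, g x ^ 2 ∂μ := integral_nonneg fun x => sq_nonneg _
  have hsum : Real.sqrt (∑ i, (∫ x, f i x * g x ∂μ) ^ 2) ≤
      (1 + t) * Real.sqrt (∫ x, g x ^ 2 ∂μ) := by
    rw [← Real.sqrt_sq (by linarith : 0 ≤ 1 + t), ← Real.sqrt_mul (sq_nonneg _)]
    refine Real.sqrt_le_sqrt ((sum_sq_integral_mul_le hf0 hf1 hfb hg hgM).trans ?_)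
    exact mul_le_mul_of_nonneg_right (by nlinarith) hI
  have hL2 := mul_le_mul_of_nonneg_left (sqrt_integral_sq_le (μ := μ) hM hgM) ht
  linarith

end WeightedIntegrals

theorem le_one_add_div_of_abs_sub_le {B a A C k : ℝ} (hk : 1 ≤ k) (ha : |a| ≤ A)
    (h : |B - 1 - a / k| ≤ C / k ^ 2) : B ≤ 1 + (A + |C|) / k := by
  have hk0 : 0 < k := by linarith
  have hC : C / k ^ 2 ≤ |C| / k := by
    rw [div_le_div_iff₀ (by positivity) hk0]
    nlinarith [mul_le_mul_of_nonneg_right (le_abs_self C) hk0.le,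
      mul_le_mul_of_nonneg_left (show k ≤ k ^ 2 by nlinarith) (abs_nonneg C)]
  have haA : a / k ≤ A / k := div_le_div_of_nonneg_right ((le_abs_self a).trans ha) hk0.le
  have hB : B - 1 - a / k ≤ C / k ^ 2 := (le_abs_self _).trans h
  rw [add_div]
  linarith

theorem stmt4_general {X : Type*} [MeasurableSpace X] (μ : Measure X) [IsFiniteMeasure μ]
    (s : X → ℝ) (hsm : Measurable s) (hsb : ∃ C, ∀ x, |s x| ≤ C)
    (S : ℝ)
    (N : ℕ → ℕ) (v : (k : ℕ) → Fin (N k + 1) → X → ℂ)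
    (hvL2 : ∀ k i, ∫ x, ‖v k i x‖ ^ 2 ∂μ = 1)
    (hB : ∃ C : ℝ, ∀ᶠ k : ℕ in atTop, ∀ x,
      |(∑ i, ‖v k i x‖ ^ 2) - 1 - s x / (4 * Real.pi * k)| ≤ C / (k : ℝ) ^ 2)
    (m : (k : ℕ) → Fin (N k + 1) → ℝ)
    (hm : ∀ k i, m k i = -(1 / (4 * Real.pi * k)) * ∫ x, ‖v k i x‖ ^ 2 * (s x - S) ∂μ) :
    ∃ C : ℝ, ∀ᶠ k : ℕ in atTop,
      Real.sqrt (∑ i, (m k i) ^ 2) ≤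
        (1 / (4 * Real.pi * k)) * Real.sqrt (∫ x, (s x - S) ^ 2 ∂μ)
          + C / (k : ℝ) ^ 2 * Real.sqrt (μ Set.univ).toReal := by
  obtain ⟨Cs, hCs⟩ := hsb
  obtain ⟨C, hC⟩ := hB
  set M := |Cs| + |S|
  set D := |Cs| / (4 * Real.pi) + |C|
  have hg : ∀ x, |s x - S| ≤ M := fun x =>
    (abs_sub _ _).trans (add_le_add_left ((hCs x).trans (le_abs_self _)) _)
  have hs : ∀ x, |s x / (4 * Real.pi)| ≤ |Cs| / (4 * Real.pi) := fun x => by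
    rw [abs_div, abs_of_pos (by positivity : (0 : ℝ) < 4 * Real.pi)]
    exact div_le_div_of_nonneg_right ((hCs x).trans (le_abs_self _)) (by positivity)
  refine ⟨D * M / (4 * Real.pi), ?_⟩
  filter_upwards [hC, eventually_ge_atTop 1] with k hCk hk
  set c := 1 / (4 * Real.pi * k)
  have hBk : ∀ x, ∑ i, ‖v k i x‖ ^ 2 ≤ 1 + D / k := fun x =>
    le_one_add_div_of_abs_sub_le (by exact_mod_cast hk) (hs x) (by rw [div_div]; exact hCk x)
  have hm2 : ∑ i, m k i ^ 2 = c ^ 2 * ∑ i, (∫ x, ‖v k i x‖ ^ 2 * (s x - S) ∂μ) ^ 2 := by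
    rw [Finset.mul_sum]
    exact Finset.sum_congr rfl fun i _ => by rw [hm k i]; ring
  rw [hm2, Real.sqrt_mul (sq_nonneg _), Real.sqrt_sq (by positivity)]
  calc c * Real.sqrt (∑ i, (∫ x, ‖v k i x‖ ^ 2 * (s x - S) ∂μ) ^ 2)
      ≤ c * (Real.sqrt (∫ x, (s x - S) ^ 2 ∂μ) + D / k * (M * Real.sqrt (μ Set.univ).toReal)) := by
        gcongr
        exact sqrt_sum_sq_integral_mul_le (by positivity) (by positivity) (fun i x => sq_nonneg _)
          (hvL2 k) hBk (hsm.sub measurable_const).aestronglyMeasurable hg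
    _ = _ := by
        simp only [c]
        field_simp

/-- Measure-theoretic core of Lemma 3.1: the diagonal entries
`m i = -(k⁻¹/4π) ∫ |s_i|² (s - S)` of the trace-free matrix satisfy
`(∑ m i ²)^{1/2} ≤ (k⁻¹/4π) ‖s - S‖_{L²} + O(k⁻² μ(X)^{1/2})`. -/
theorem stmt4 {X : Type*} [MeasurableSpace X] (μ : Measure X) [IsFiniteMeasure μ]
    (s : X → ℝ) (hsm : Measurable s) (hsb : ∃ C, ∀ x, |s x| ≤ C)
    (S : ℝ) (hS : S = (∫ x, s x ∂μ) / (μ Set.univ).toReal)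
    (N : ℕ → ℕ) (v : (k : ℕ) → Fin (N k + 1) → X → ℂ)
    (hvm : ∀ k i, Measurable (v k i))
    (hvL2 : ∀ k i, ∫ x, ‖v k i x‖ ^ 2 ∂μ = 1)
    (hB : ∃ C : ℝ, ∀ᶠ k : ℕ in atTop, ∀ x,
      |(∑ i, ‖v k i x‖ ^ 2) - 1 - s x / (4 * Real.pi * k)| ≤ C / (k : ℝ) ^ 2)
    (m : (k : ℕ) → Fin (N k + 1) → ℝ)
    (hm : ∀ k i, m k i = -(1 / (4 * Real.pi * k)) * ∫ x, ‖v k i x‖ ^ 2 * (s x - S) ∂μ) :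
    ∃ C : ℝ, ∀ᶠ k : ℕ in atTop,
      Real.sqrt (∑ i, (m k i) ^ 2) ≤
        (1 / (4 * Real.pi * k)) * Real.sqrt (∫ x, (s x - S) ^ 2 ∂μ)
          + C / (k : ℝ) ^ 2 * Real.sqrt (μ Set.univ).toReal :=
  stmt4_general μ s hsm hsb S N v hvL2 hB m hm
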